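/- arXiv:2504.09917 — 3 statements merged into one kernel-verified Lean document; each statement's English description precedes it below -/
import Mathlib

section
/- Let $(F^{N,j})_{1 \le j \le N}$ be the marginals of an exchangeable probability measure on $\mathbb{X}^N$ (so they are consistent: integrating $F^{N,j+1}$ in its last variable gives $F^{N,j}$, and each $F^{N,j}$ is symmetric). Define the correlation functions $G^{N,m}$ by $G^{N,m}(z_1,\dots,z_m) = \sum_{\pi \vdash [m]} (\sharp\pi - 1)!(-1)^{\sharp\pi - 1} \prod_{B\in\pi} F^{N,\sharp B}(z_B)$. Then for all $2 \le m \le N$ and each $1 \le l \le m$: $\int_{\mathbb{X}} G^{N,m}(z_1,\dots,z_m)\, dz_l = 0$. -/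
/-!
Integrating out `z_l` only touches the block `P ∋ l` of each partition `π`: by consistency it
turns `F^{♯P}(z_P)` into `F^{♯P-1}(z_{P \ l})`, or into `1` when `P = {l}`. So the integrated
term is `c(♯π) ∏_{B ∈ π'} F^{♯B}(z_B)` with `c(k) = (-1)^(k-1) (k-1)!`, where `π'` is the
partition of `[m] \ {l}` obtained by deleting `l`. A partition `π'` with `k` blocks comes from
one `π` with `k + 1` blocks (`{l}` a singleton block) and from `k` partitions with `k` blocks
(`l` inserted into a block of `π'`), and `c(k + 1) + k c(k) = 0`.
-/

open Finset MeasureTheory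

/-- Evaluate a family of symmetric kernels on the coordinates indexed by a block. -/
noncomputable def blockEval {X : Type*} (F : ∀ j : ℕ, (Fin j → X) → ℝ)
    {m : ℕ} (z : Fin m → X) (B : Finset (Fin m)) : ℝ :=
  F B.card (fun i => z (B.orderIsoOfFin rfl i))

namespace Finpartition

variable {α : Type*} [DecidableEq α] {s : Finset α} {a : α}

theorem parts_avoid_of_mem (π : Finpartition s) {B : Finset α} (hB : B ∈ π.parts) :
    (π.avoid B).parts = π.parts.erase B := by
  ext C
  rw [mem_avoid, mem_erase]
  constructor
  · rintro ⟨D, hD, hDB, rfl⟩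
    have hne : D ≠ B := by rintro rfl; exact hDB le_rfl
    have hdis : Disjoint D B := π.disjoint hD hB hne
    rw [hdis.sdiff_eq_left]
    exact ⟨hne, hD⟩
  · rintro ⟨hne, hC⟩
    have hdis : Disjoint C B := π.disjoint hC hB hne
    exact ⟨C, hC, fun hle => π.ne_empty hC (hdis.eq_bot_of_le hle), hdis.sdiff_eq_left⟩

theorem image_erase_parts (π : Finpartition s) (ha : a ∈ s) :
    π.parts.image (·.erase a) = insert ((π.part a).erase a) (π.parts.erase (π.part a)) := by
  have hfix : ∀ B ∈ π.parts.erase (π.part a), B.erase a = B := fun B hB =>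
    erase_eq_of_notMem fun haB =>
      ne_of_mem_erase hB (π.part_eq_of_mem (mem_of_mem_erase hB) haB).symm
  conv_lhs => rw [← insert_erase (π.part_mem.2 ha), image_insert, image_congr hfix, image_id']

theorem parts_restrict_erase (π : Finpartition s) :
    (π.restrict (erase_subset a s)).parts = (π.parts.image (·.erase a)).erase ∅ := by
  have hinter : ∀ B ∈ π.parts, B ∩ s.erase a = B.erase a := fun B hB => by
    rw [inter_erase, inter_eq_left.2 (π.le hB)]
  exact congrArg (·.erase ∅) (image_congr hinter)

theorem parts_restrict_erase_of_part_eq (π : Finpartition s) (h : π.part a = {a}) :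
    (π.restrict (erase_subset a s)).parts = π.parts.erase {a} := by
  have ha : a ∈ s := π.mem_part_self.1 (h ▸ mem_singleton_self a)
  rw [parts_restrict_erase, image_erase_parts π ha, h, erase_singleton, erase_insert_eq_erase,
    erase_eq_of_notMem fun h0 => π.empty_notMem_parts (mem_of_mem_erase h0)]

theorem parts_restrict_erase_of_part_ne (π : Finpartition s) (ha : a ∈ s)
    (h : π.part a ≠ {a}) :
    (π.restrict (erase_subset a s)).parts =
      insert ((π.part a).erase a) (π.parts.erase (π.part a)) := by
  have hne : (π.part a).erase a ≠ ∅ := by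
    rw [Ne, erase_eq_empty_iff, not_or]
    exact ⟨π.ne_empty (π.part_mem.2 ha), h⟩
  rw [parts_restrict_erase, image_erase_parts π ha, erase_insert_of_ne hne,
    erase_eq_of_notMem fun h0 => π.empty_notMem_parts (mem_of_mem_erase h0)]

def insertSingleton (ρ : Finpartition (s.erase a)) (ha : a ∈ s) : Finpartition s :=
  ρ.extend (b := {a}) (singleton_ne_empty a) (disjoint_singleton_right.2 (notMem_erase a s))
    (by rw [sup_eq_union, union_comm, ← insert_eq, insert_erase ha])

def insertIntoPart (ρ : Finpartition (s.erase a)) (ha : a ∈ s) {B : Finset α}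
    (hB : B ∈ ρ.parts) : Finpartition s :=
  (ρ.avoid B).extend (b := insert a B) (insert_ne_empty a B)
    (disjoint_insert_right.2 ⟨by simp, disjoint_sdiff_self_left⟩)
    (by
      have hBs : B ⊆ s.erase a := ρ.le hB
      rw [sup_eq_union, union_insert, sdiff_union_of_subset hBs, insert_erase ha])

variable (ρ : Finpartition (s.erase a)) (ha : a ∈ s)

theorem parts_insertSingleton : (ρ.insertSingleton ha).parts = insert {a} ρ.parts := rfl

theorem parts_insertIntoPart {B : Finset α} (hB : B ∈ ρ.parts) :
    (ρ.insertIntoPart ha hB).parts = insert (insert a B) (ρ.parts.erase B) :=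
  congrArg (insert (insert a B)) (ρ.parts_avoid_of_mem hB)

theorem part_insertSingleton : (ρ.insertSingleton ha).part a = {a} :=
  part_eq_of_mem _ (by rw [parts_insertSingleton]; exact mem_insert_self _ _)
    (mem_singleton_self a)

theorem part_insertIntoPart {B : Finset α} (hB : B ∈ ρ.parts) :
    (ρ.insertIntoPart ha hB).part a = insert a B :=
  part_eq_of_mem _ (by rw [parts_insertIntoPart]; exact mem_insert_self _ _) (mem_insert_self a B)

theorem notMem_of_mem_parts {B : Finset α} (hB : B ∈ ρ.parts) : a ∉ B :=
  fun haB => notMem_erase a s (ρ.le hB haB)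

theorem insert_ne_singleton_of_mem_parts {B : Finset α} (hB : B ∈ ρ.parts) :
    insert a B ≠ {a} := by
  obtain ⟨b, hb⟩ := ρ.nonempty_of_mem_parts hB
  intro h
  have hba : b = a := mem_singleton.1 (h ▸ mem_insert_of_mem hb)
  exact ρ.notMem_of_mem_parts hB (hba ▸ hb)

theorem erase_part_notMem_parts (π : Finpartition s) : (π.part a).erase a ∉ π.parts := by
  intro hmem
  obtain ⟨b, hb⟩ := π.nonempty_of_mem_parts hmem
  have ha : a ∈ s := π.part_nonempty.1 ⟨b, mem_of_mem_erase hb⟩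
  have heq := π.eq_of_mem_parts hmem (π.part_mem.2 ha) hb (mem_of_mem_erase hb)
  exact notMem_erase a _ (heq ▸ π.mem_part_self.2 ha)

variable {M : Type*} [AddCommMonoid M]

theorem sum_filter_part_eq_singleton (f : Finpartition s → M) :
    ∑ π with π.part a = {a}, f π =
      ∑ ρ : Finpartition (s.erase a), f (ρ.insertSingleton ha) := by
  symm
  refine sum_bij' (fun ρ _ => ρ.insertSingleton ha) (fun π _ => π.restrict (erase_subset a s))
    (fun ρ _ => mem_filter.2 ⟨mem_univ _, part_insertSingleton ρ ha⟩) (fun _ _ => mem_univ _)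
    (fun ρ _ => ?_) (fun π hπ => ?_) (fun _ _ => rfl)
  · ext1
    rw [parts_restrict_erase_of_part_eq _ (part_insertSingleton ρ ha), parts_insertSingleton,
      erase_insert fun h => ρ.notMem_of_mem_parts h (mem_singleton_self a)]
  · have h : π.part a = {a} := (mem_filter.1 hπ).2
    ext1
    rw [parts_insertSingleton, parts_restrict_erase_of_part_eq _ h,
      insert_erase (h ▸ π.part_mem.2 ha)]

theorem sum_filter_part_ne_singleton (f : Finpartition s → M) :
    ∑ π with π.part a ≠ {a}, f π =
      ∑ ρ : Finpartition (s.erase a),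
        ∑ B ∈ ρ.parts.attach, f (ρ.insertIntoPart ha B.2) := by
  rw [sum_sigma']
  symm
  refine sum_bij' (fun p _ => p.1.insertIntoPart ha p.2.2)
    (fun π hπ => ⟨π.restrict (erase_subset a s), ⟨(π.part a).erase a, by
      rw [parts_restrict_erase_of_part_ne π ha (mem_filter.1 hπ).2]
      exact mem_insert_self _ _⟩⟩)
    (fun p _ => ?_) (fun _ _ => mem_sigma.2 ⟨mem_univ _, mem_attach _ _⟩)
    (fun p _ => ?_) (fun π hπ => ?_) (fun _ _ => rfl)
  · rw [mem_filter, part_insertIntoPart]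
    exact ⟨mem_univ _, p.1.insert_ne_singleton_of_mem_parts p.2.2⟩
  · obtain ⟨ρ, B, hB⟩ := p
    have haB : a ∉ B := ρ.notMem_of_mem_parts hB
    refine Sigma.subtype_ext ?_ (by simp only [part_insertIntoPart, erase_insert haB])
    ext1
    have hne : (ρ.insertIntoPart ha hB).part a ≠ {a} := by
      rw [part_insertIntoPart]
      exact ρ.insert_ne_singleton_of_mem_parts hB
    rw [parts_restrict_erase_of_part_ne _ ha hne, part_insertIntoPart, erase_insert haB,
      parts_insertIntoPart,
      erase_insert fun h => ρ.notMem_of_mem_parts (mem_of_mem_erase h) (mem_insert_self a B),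
      insert_erase hB]
  · have h : π.part a ≠ {a} := (mem_filter.1 hπ).2
    ext1
    dsimp only
    rw [parts_insertIntoPart, parts_restrict_erase_of_part_ne π ha h,
      insert_erase (π.mem_part_self.2 ha),
      erase_insert fun h' => π.erase_part_notMem_parts (mem_of_mem_erase h'),
      insert_erase (π.part_mem.2 ha)]

theorem sum_alternating_prod_eq_zero {R : Type*} [CommRing R] (ha : a ∈ s)
    (hs : (s.erase a).Nonempty) (Q : Finset α → R) (hQa : Q {a} = 1)
    (hQ : ∀ B, B ≠ {a} → Q (B.erase a) = Q B) :
    ∑ π : Finpartition s, (-1 : R) ^ (#π.parts - 1) * (#π.parts - 1).factorial *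
      ∏ B ∈ π.parts, Q B = 0 := by
  rw [← sum_filter_add_sum_filter_not univ (fun π => π.part a = {a}),
    sum_filter_part_eq_singleton ha, sum_filter_part_ne_singleton ha, ← sum_add_distrib]
  refine sum_eq_zero fun ρ _ => ?_
  have hprod_singleton :
      ∏ B ∈ (ρ.insertSingleton ha).parts, Q B = ∏ B ∈ ρ.parts, Q B := by
    rw [parts_insertSingleton,
      prod_insert fun h => ρ.notMem_of_mem_parts h (mem_singleton_self a), hQa, one_mul]
  have hprod_insert : ∀ B (hB : B ∈ ρ.parts),
      ∏ C ∈ (ρ.insertIntoPart ha hB).parts, Q C = ∏ C ∈ ρ.parts, Q C := fun B hB => by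
    rw [parts_insertIntoPart,
      prod_insert fun h => ρ.notMem_of_mem_parts (mem_of_mem_erase h) (mem_insert_self a B),
      ← hQ _ (ρ.insert_ne_singleton_of_mem_parts hB), erase_insert (ρ.notMem_of_mem_parts hB),
      mul_prod_erase _ _ hB]
  have hcard_insert : ∀ B (hB : B ∈ ρ.parts), #(ρ.insertIntoPart ha hB).parts = #ρ.parts :=
    fun B hB => by
      rw [parts_insertIntoPart, card_insert_of_notMem
        fun h => ρ.notMem_of_mem_parts (mem_of_mem_erase h) (mem_insert_self a B),
        card_erase_add_one hB]
  have hcard_singleton : #(ρ.insertSingleton ha).parts = #ρ.parts + 1 := card_extend ..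
  obtain ⟨k, hk⟩ : ∃ k, #ρ.parts = k + 1 :=
    Nat.exists_eq_add_one.2 (card_pos.2 (ρ.parts_nonempty hs.ne_empty))
  simp only [hprod_singleton, hprod_insert, hcard_insert, hcard_singleton, hk,
    sum_const, card_attach, nsmul_eq_mul, Nat.add_sub_cancel, Nat.factorial_succ]
  push_cast
  ring

end Finpartition

section BlockEval

variable {X : Type*} {F : ∀ j : ℕ, (Fin j → X) → ℝ} {m : ℕ}

theorem apply_comp_finEquiv_of_symmetric
    (hsym : ∀ (j : ℕ) (σ : Equiv.Perm (Fin j)) (z : Fin j → X), F j (z ∘ σ) = F j z)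
    {n k : ℕ} (σ : Fin n ≃ Fin k) (v : Fin k → X) : F n (v ∘ σ) = F k v := by
  obtain rfl := Fin.equiv_iff_eq.mp ⟨σ⟩
  exact hsym n σ v

theorem blockEval_eq_of_range_eq
    (hsym : ∀ (j : ℕ) (σ : Equiv.Perm (Fin j)) (z : Fin j → X), F j (z ∘ σ) = F j z)
    (w : Fin m → X) {B : Finset (Fin m)} {n : ℕ} (τ : Fin n ↪ Fin m)
    (hτ : Set.range τ = B) : blockEval F w B = F n (w ∘ τ) := by
  let σ : Fin n ≃ Fin B.card := (Equiv.ofInjective τ τ.injective).trans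
    ((Equiv.subtypeEquivRight fun x => by rw [hτ, mem_coe]).trans (B.orderIsoOfFin rfl).symm)
  rw [blockEval, ← apply_comp_finEquiv_of_symmetric hsym σ]
  congr 1
  ext i
  change w (B.orderIsoOfFin rfl ((B.orderIsoOfFin rfl).symm _) : Fin m) = w (τ i)
  rw [OrderIso.apply_symm_apply]
  rfl

theorem blockEval_update_of_notMem (z : Fin m → X) {l : Fin m} (x : X) {B : Finset (Fin m)}
    (hl : l ∉ B) : blockEval F (Function.update z l x) B = blockEval F z B := by
  unfold blockEval
  congr 1
  ext i
  exact Function.update_of_ne (ne_of_mem_of_not_mem (B.orderIsoOfFin rfl i).2 hl) x z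

theorem blockEval_update_of_mem
    (hsym : ∀ (j : ℕ) (σ : Equiv.Perm (Fin j)) (z : Fin j → X), F j (z ∘ σ) = F j z)
    (z : Fin m → X) {l : Fin m} (x : X) {B : Finset (Fin m)} (hl : l ∈ B) :
    blockEval F (Function.update z l x) B =
      F ((B.erase l).card + 1) (Fin.snoc (fun i => z ((B.erase l).orderIsoOfFin rfl i)) x) := by
  set e := (B.erase l).orderEmbOfFin rfl
  have hl' : l ∉ Set.range e := by simp [e]
  rw [blockEval_eq_of_range_eq hsym _ (Fin.Embedding.snoc e.toEmbedding hl')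
    (by simpa [Fin.range_snoc, e])]
  congr 1
  ext i
  induction i using Fin.lastCases with
  | last => simp
  | cast i =>
    simp only [Function.comp_apply, Fin.Embedding.snoc_castSucc, Fin.snoc_castSucc]
    exact Function.update_of_ne (fun h => hl' ⟨i, h⟩) x z

/-- The integral of `blockEval F (Function.update z l x) B` in `x`, for a block `B ∋ l`. -/
noncomputable def blockEvalMarginal (F : ∀ j : ℕ, (Fin j → X) → ℝ) (z : Fin m → X)
    (l : Fin m) (B : Finset (Fin m)) : ℝ :=
  if B = {l} then 1 else blockEval F z (B.erase l)

theorem blockEvalMarginal_singleton (z : Fin m → X) (l : Fin m) :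
    blockEvalMarginal F z l {l} = 1 :=
  if_pos rfl

theorem blockEvalMarginal_of_notMem (z : Fin m → X) {l : Fin m} {B : Finset (Fin m)}
    (hl : l ∉ B) : blockEvalMarginal F z l B = blockEval F z B := by
  rw [blockEvalMarginal, if_neg fun h : B = {l} => hl (h ▸ mem_singleton_self l),
    erase_eq_of_notMem hl]

theorem blockEvalMarginal_erase (z : Fin m → X) {l : Fin m} {B : Finset (Fin m)}
    (hB : B ≠ {l}) :
    blockEvalMarginal F z l (B.erase l) = blockEvalMarginal F z l B := by
  rw [blockEvalMarginal_of_notMem z (notMem_erase l B), blockEvalMarginal, if_neg hB]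

theorem prod_blockEval_update
    {s : Finset (Fin m)} (π : Finpartition s) (z : Fin m → X) {l : Fin m} (hl : l ∈ s)
    (x : X) :
    ∏ B ∈ π.parts, blockEval F (Function.update z l x) B =
      blockEval F (Function.update z l x) (π.part l) *
        ∏ B ∈ π.parts.erase (π.part l), blockEvalMarginal F z l B := by
  rw [← mul_prod_erase _ _ (π.part_mem.2 hl)]
  refine congrArg _ (prod_congr rfl fun B hB => ?_)
  have hlB : l ∉ B := fun h =>
    ne_of_mem_erase hB (π.part_eq_of_mem (mem_of_mem_erase hB) h).symm
  rw [blockEval_update_of_notMem z x hlB, blockEvalMarginal_of_notMem z hlB]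

end BlockEval

section Integral

variable {X : Type*} [MeasurableSpace X] {μ : Measure X} {F : ∀ j : ℕ, (Fin j → X) → ℝ}
  {m : ℕ}

theorem integral_snoc (hnorm : ∫ x, F 1 (fun _ => x) ∂μ = 1)
    (hconsist : ∀ (j : ℕ), 1 ≤ j → ∀ z : Fin j → X,
      ∫ x, F (j + 1) (Fin.snoc z x) ∂μ = F j z)
    {j : ℕ} (w : Fin j → X) :
    ∫ x, F (j + 1) (Fin.snoc w x) ∂μ = if j = 0 then 1 else F j w := by
  cases j with
  | zero =>
    rw [if_pos rfl]
    exact hnorm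
  | succ j => exact hconsist (j + 1) j.succ_pos w

theorem integrable_blockEval_update
    (hsym : ∀ (j : ℕ) (σ : Equiv.Perm (Fin j)) (z : Fin j → X), F j (z ∘ σ) = F j z)
    (hint : ∀ (j : ℕ) (z : Fin j → X), Integrable (fun x => F (j + 1) (Fin.snoc z x)) μ)
    (z : Fin m → X) {l : Fin m} {B : Finset (Fin m)} (hl : l ∈ B) :
    Integrable (fun x => blockEval F (Function.update z l x) B) μ := by
  simp only [blockEval_update_of_mem hsym z _ hl]
  exact hint _ _

theorem integral_blockEval_update
    (hsym : ∀ (j : ℕ) (σ : Equiv.Perm (Fin j)) (z : Fin j → X), F j (z ∘ σ) = F j z)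
    (hnorm : ∫ x, F 1 (fun _ => x) ∂μ = 1)
    (hconsist : ∀ (j : ℕ), 1 ≤ j → ∀ z : Fin j → X,
      ∫ x, F (j + 1) (Fin.snoc z x) ∂μ = F j z)
    (z : Fin m → X) {l : Fin m} {B : Finset (Fin m)} (hl : l ∈ B) :
    ∫ x, blockEval F (Function.update z l x) B ∂μ = blockEvalMarginal F z l B := by
  simp only [blockEval_update_of_mem hsym z _ hl, integral_snoc hnorm hconsist,
    blockEvalMarginal, card_eq_zero, erase_eq_empty_iff, or_iff_right (ne_empty_of_mem hl)]
  rfl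

theorem integrable_prod_blockEval_update
    (hsym : ∀ (j : ℕ) (σ : Equiv.Perm (Fin j)) (z : Fin j → X), F j (z ∘ σ) = F j z)
    (hint : ∀ (j : ℕ) (z : Fin j → X), Integrable (fun x => F (j + 1) (Fin.snoc z x)) μ)
    {s : Finset (Fin m)} (π : Finpartition s) (z : Fin m → X) {l : Fin m} (hl : l ∈ s) :
    Integrable (fun x => ∏ B ∈ π.parts, blockEval F (Function.update z l x) B) μ := by
  simp only [prod_blockEval_update π z hl]
  exact (integrable_blockEval_update hsym hint z (π.mem_part_self.2 hl)).mul_const _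

theorem integral_prod_blockEval_update
    (hsym : ∀ (j : ℕ) (σ : Equiv.Perm (Fin j)) (z : Fin j → X), F j (z ∘ σ) = F j z)
    (hnorm : ∫ x, F 1 (fun _ => x) ∂μ = 1)
    (hconsist : ∀ (j : ℕ), 1 ≤ j → ∀ z : Fin j → X,
      ∫ x, F (j + 1) (Fin.snoc z x) ∂μ = F j z)
    {s : Finset (Fin m)} (π : Finpartition s) (z : Fin m → X) {l : Fin m} (hl : l ∈ s) :
    ∫ x, ∏ B ∈ π.parts, blockEval F (Function.update z l x) B ∂μ =
      ∏ B ∈ π.parts, blockEvalMarginal F z l B := by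
  simp only [prod_blockEval_update π z hl]
  rw [integral_mul_const, integral_blockEval_update hsym hnorm hconsist z (π.mem_part_self.2 hl),
    mul_prod_erase _ _ (π.part_mem.2 hl)]

end Integral

theorem correlation_integral_zero_general
    {𝕏 : Type*} [MeasurableSpace 𝕏] (μ : Measure 𝕏)
    (F : ∀ j : ℕ, (Fin j → 𝕏) → ℝ)
    (hsym : ∀ (j : ℕ) (σ : Equiv.Perm (Fin j)) (z : Fin j → 𝕏), F j (z ∘ σ) = F j z)
    (hnorm : ∫ x, F 1 (fun _ => x) ∂μ = 1)
    (hint : ∀ (j : ℕ) (z : Fin j → 𝕏),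
      Integrable (fun x => F (j + 1) (Fin.snoc z x)) μ)
    (hconsist : ∀ (j : ℕ), 1 ≤ j → ∀ z : Fin j → 𝕏,
      ∫ x, F (j + 1) (Fin.snoc z x) ∂μ = F j z)
    (m : ℕ) (hm : 2 ≤ m) (l : Fin m) (z : Fin m → 𝕏) :
    ∫ x, (∑ π : Finpartition (univ : Finset (Fin m)),
        (-1 : ℝ) ^ (π.parts.card - 1) * (π.parts.card - 1).factorial *
          ∏ B ∈ π.parts, blockEval F (Function.update z l x) B) ∂μ = 0 := by
  have hl : l ∈ (univ : Finset (Fin m)) := mem_univ l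
  have hs : (univ.erase l).Nonempty := by
    rw [← card_pos, card_erase_of_mem hl, card_univ, Fintype.card_fin]
    omega
  rw [integral_finsetSum _ fun π _ =>
    (integrable_prod_blockEval_update hsym hint π z hl).const_mul _]
  simp only [integral_const_mul, integral_prod_blockEval_update hsym hnorm hconsist _ z hl]
  exact Finpartition.sum_alternating_prod_eq_zero hl hs _ (blockEvalMarginal_singleton z l)
    fun _ hB => blockEvalMarginal_erase z hB

/-- if `(F^j)_j` is a consistent symmetric family of marginal densities
(w.r.t. a reference measure `μ`, with `∫ F¹ dμ = 1` and
`∫ F^{j+1}(z, x) dμ(x) = F^j(z)`), then the correlation function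
`G^m(z) = ∑_{π ⊢ [m]} (♯π-1)!(-1)^{♯π-1} ∏_{B∈π} F^{♯B}(z_B)` satisfies
`∫ G^m dμ(z_l) = 0` in each variable `z_l`, for `2 ≤ m ≤ N`. -/
theorem correlation_integral_zero
    {𝕏 : Type*} [MeasurableSpace 𝕏] (μ : Measure 𝕏)
    (N : ℕ) (F : ∀ j : ℕ, (Fin j → 𝕏) → ℝ)
    (hsym : ∀ (j : ℕ) (σ : Equiv.Perm (Fin j)) (z : Fin j → 𝕏), F j (z ∘ σ) = F j z)
    (hnorm : ∫ x, F 1 (fun _ => x) ∂μ = 1)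
    (hint : ∀ (j : ℕ) (z : Fin j → 𝕏),
      Integrable (fun x => F (j + 1) (Fin.snoc z x)) μ)
    (hconsist : ∀ (j : ℕ), 1 ≤ j → ∀ z : Fin j → 𝕏,
      ∫ x, F (j + 1) (Fin.snoc z x) ∂μ = F j z)
    (m : ℕ) (hm : 2 ≤ m) (hmN : m ≤ N) (l : Fin m) (z : Fin m → 𝕏) :
    ∫ x, (∑ π : Finpartition (univ : Finset (Fin m)),
        (-1 : ℝ) ^ (π.parts.card - 1) * (π.parts.card - 1).factorial *
          ∏ B ∈ π.parts, blockEval F (Function.update z l x) B) ∂μ = 0 :=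
  correlation_integral_zero_general μ F hsym hnorm hint hconsist m hm l z
end

section
/- Fix $\beta, \kappa > 0$ and a bounded measurable even potential $W : \mathbb{R}^d \to \mathbb{R}$ with $\kappa\beta\|W\|_{L^\infty} < 1$, together with a confining potential $A(x) = \frac{a}{2}|x|^2$, $a > 0$. Then the Gibbs fixed-point equation $M(x,v) = c_M \exp\big[-\beta(\tfrac12|v|^2 + A(x) + \kappa\, W * \rho_M(x))\big]$, where $\rho_M(x) = \int M(x,v)\,dv$ and $c_M$ normalizes $\int M = 1$, admits at most one solution $M$ in the class of probability densities on $\mathbb{R}^d\times\mathbb{R}^d$. -/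
/-!
Both solutions carry the same factor `exp (-β (|v|²/2 + A x))`, so `M₁ = r · e^φ · M₂` with
`φ = -βκ (W * ρ₁ - W * ρ₂)`, and boundedness of `W` gives `|φ| ≤ βκ ‖W‖_∞ D` where
`D = ‖M₁ - M₂‖_{L¹}`. Tilting a probability density by `e^φ` with `|φ| ≤ s` moves it by at most
`2 tanh (s/2) ≤ s` in `L¹` (chord bound for the mean absolute deviation of `e^φ ∈ [e^{-s}, e^s]`).
Hence `D ≤ κβ‖W‖_∞ D`, so `D = 0`; then `W * ρ₁ = W * ρ₂` and the normalisations agree.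
-/

open MeasureTheory Real

lemma Real.sinh_le_mul_cosh {t : ℝ} (ht : 0 ≤ t) : sinh t ≤ t * cosh t := by
  rcases ht.eq_or_lt with rfl | ht
  · simp
  obtain ⟨c, ⟨hc0, hct⟩, hc⟩ := exists_hasDerivAt_eq_slope sinh cosh ht
    continuous_sinh.continuousOn fun x _ => hasDerivAt_sinh x
  have hcosh : cosh c ≤ cosh t :=
    cosh_le_cosh.2 (by rw [abs_of_pos hc0, abs_of_pos ht]; exact hct.le)
  rw [hc, sinh_zero, sub_zero, sub_zero, div_le_iff₀ ht] at hcosh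
  linarith

lemma Real.two_mul_cosh_sub_one_le {s : ℝ} (hs : 0 ≤ s) : 2 * (cosh s - 1) ≤ s * sinh s := by
  obtain ⟨t, rfl⟩ : ∃ t, s = 2 * t := ⟨s / 2, by ring⟩
  have ht : 0 ≤ t := by linarith
  rw [cosh_two_mul, sinh_two_mul, cosh_sq]
  nlinarith [sinh_le_mul_cosh ht, sinh_nonneg_iff.2 ht]

section

variable {α : Type*} [MeasurableSpace α] {μ : Measure α}

lemma integral_mul_mem_Icc {g Y : α → ℝ} {A B : ℝ} (hg : ∀ x, 0 ≤ g x) (hg1 : ∫ x, g x ∂μ = 1)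
    (hYg : Integrable (fun x => Y x * g x) μ) (hY : ∀ x, Y x ∈ Set.Icc A B) :
    ∫ x, Y x * g x ∂μ ∈ Set.Icc A B := by
  have hg_int : Integrable g μ := .of_integral_ne_zero (by rw [hg1]; exact one_ne_zero)
  constructor
  · calc A = ∫ x, A * g x ∂μ := by rw [integral_const_mul, hg1, mul_one]
      _ ≤ ∫ x, Y x * g x ∂μ := integral_mono (hg_int.const_mul A) hYg fun x =>
          mul_le_mul_of_nonneg_right (hY x).1 (hg x)
  · calc ∫ x, Y x * g x ∂μ ≤ ∫ x, B * g x ∂μ := integral_mono hYg (hg_int.const_mul B) fun x =>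
          mul_le_mul_of_nonneg_right (hY x).2 (hg x)
      _ = B := by rw [integral_const_mul, hg1, mul_one]

lemma mul_integral_abs_sub_le {g Y : α → ℝ} {A B : ℝ} (hg : ∀ x, 0 ≤ g x)
    (hg1 : ∫ x, g x ∂μ = 1) (hYg : Integrable (fun x => Y x * g x) μ)
    (hY : ∀ x, Y x ∈ Set.Icc A B) :
    (B - A) * ∫ x, g x * |Y x - ∫ y, Y y * g y ∂μ| ∂μ
      ≤ 2 * (B - ∫ y, Y y * g y ∂μ) * ((∫ y, Y y * g y ∂μ) - A) := by
  set m := ∫ y, Y y * g y ∂μ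
  have hg_int : Integrable g μ := .of_integral_ne_zero (by rw [hg1]; exact one_ne_zero)
  obtain ⟨hAm, hmB⟩ := integral_mul_mem_Icc hg hg1 hYg hY
  have hdev_int : Integrable (fun x => g x * |Y x - m|) μ := by
    refine ((hYg.sub (hg_int.const_mul m)).abs).congr (ae_of_all _ fun x => ?_)
    simp only [Pi.sub_apply]
    rw [← sub_mul, abs_mul, abs_of_nonneg (hg x), mul_comm]
  -- `|t - m|` lies below its chord over `[A, B]`
  have chord : ∀ x, (B - A) * (g x * |Y x - m|)
      ≤ (2 * (B - m) - (B - A)) * (Y x * g x) + ((B - A) * m - 2 * (B - m) * A) * g x := by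
    intro x
    obtain ⟨hAY, hYB⟩ := hY x
    have hdev : (B - A) * |Y x - m| ≤ 2 * (B - m) * (Y x - A) - (B - A) * (Y x - m) := by
      rcases le_total m (Y x) with h | h
      · rw [abs_of_nonneg (sub_nonneg.2 h)]; nlinarith
      · rw [abs_of_nonpos (sub_nonpos.2 h)]; nlinarith
    nlinarith [mul_le_mul_of_nonneg_left hdev (hg x)]
  calc (B - A) * ∫ x, g x * |Y x - m| ∂μ = ∫ x, (B - A) * (g x * |Y x - m|) ∂μ :=
        (integral_const_mul _ _).symm
    _ ≤ ∫ x, (2 * (B - m) - (B - A)) * (Y x * g x) + ((B - A) * m - 2 * (B - m) * A) * g x ∂μ :=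
        integral_mono (hdev_int.const_mul _) ((hYg.const_mul _).add (hg_int.const_mul _)) chord
    _ = 2 * (B - m) * (m - A) := by
        rw [integral_add (hYg.const_mul _) (hg_int.const_mul _), integral_const_mul,
          integral_const_mul, hg1]
        ring

lemma integral_abs_sub_le_of_eq_mul_exp_of_pos {f g φ : α → ℝ} {r s : ℝ} (hs : 0 < s)
    (hg : ∀ x, 0 ≤ g x) (hf1 : ∫ x, f x ∂μ = 1) (hg1 : ∫ x, g x ∂μ = 1)
    (hfg : ∀ x, f x = r * exp (φ x) * g x) (hφ : ∀ x, |φ x| ≤ s) :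
    ∫ x, |f x - g x| ∂μ ≤ s := by
  set m := ∫ x, exp (φ x) * g x ∂μ
  have hf_int : Integrable f μ := .of_integral_ne_zero (by rw [hf1]; exact one_ne_zero)
  have hr : r ≠ 0 := by
    rintro rfl
    simp [hfg] at hf1
  have hYg : Integrable (fun x => exp (φ x) * g x) μ :=
    (hf_int.const_mul r⁻¹).congr (ae_of_all _ fun x => by simp only [hfg x]; field_simp)
  have hrm : r * m = 1 := by
    rw [← integral_const_mul, ← hf1]
    exact integral_congr_ae (ae_of_all _ fun x => by simp only [hfg x, mul_assoc])
  have hY : ∀ x, exp (φ x) ∈ Set.Icc (exp (-s)) (exp s) := fun x =>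
    ⟨exp_le_exp.2 (neg_le_of_abs_le (hφ x)), exp_le_exp.2 (le_of_abs_le (hφ x))⟩
  have hm_pos : 0 < m := (exp_pos _).trans_le (integral_mul_mem_Icc hg hg1 hYg hY).1
  have hmT : m * ∫ x, |f x - g x| ∂μ = ∫ x, g x * |exp (φ x) - m| ∂μ := by
    rw [← integral_const_mul]
    refine integral_congr_ae (ae_of_all _ fun x => ?_)
    have : m * (f x - g x) = g x * (exp (φ x) - m) := by
      rw [hfg x]; linear_combination (exp (φ x) * g x) * hrm
    calc m * |f x - g x| = |m * (f x - g x)| := by rw [abs_mul, abs_of_pos hm_pos]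
      _ = g x * |exp (φ x) - m| := by rw [this, abs_mul, abs_of_nonneg (hg x)]
  have hAB : exp (-s) * exp s = 1 := by rw [← exp_add, neg_add_cancel, exp_zero]
  have hgap : 0 < exp s - exp (-s) := by rw [sub_pos, exp_lt_exp]; linarith
  have htanh : 2 * (exp (-s) + exp s - 2) ≤ s * (exp s - exp (-s)) := by
    have := two_mul_cosh_sub_one_le hs.le
    rw [cosh_eq, sinh_eq] at this
    linarith
  refine le_of_mul_le_mul_left (a := m * (exp s - exp (-s))) ?_ (mul_pos hm_pos hgap)
  calc m * (exp s - exp (-s)) * ∫ x, |f x - g x| ∂μ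
      = (exp s - exp (-s)) * ∫ x, g x * |exp (φ x) - m| ∂μ := by rw [← hmT]; ring
    _ ≤ 2 * (exp s - m) * (m - exp (-s)) := mul_integral_abs_sub_le hg hg1 hYg hY
    -- the gap is `2 (m - 1)²`, as `exp (-s) * exp s = 1`
    _ ≤ m * (2 * (exp (-s) + exp s - 2)) := by nlinarith [sq_nonneg (m - 1)]
    _ ≤ m * (s * (exp s - exp (-s))) := mul_le_mul_of_nonneg_left htanh hm_pos.le
    _ = m * (exp s - exp (-s)) * s := by ring

lemma integral_abs_sub_le_of_eq_mul_exp {f g φ : α → ℝ} {r s : ℝ}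
    (hg : ∀ x, 0 ≤ g x) (hf1 : ∫ x, f x ∂μ = 1) (hg1 : ∫ x, g x ∂μ = 1)
    (hfg : ∀ x, f x = r * exp (φ x) * g x) (hφ : ∀ x, |φ x| ≤ s) :
    ∫ x, |f x - g x| ∂μ ≤ s := by
  obtain ⟨x₀⟩ : Nonempty α := by
    by_contra h
    rw [not_nonempty_iff] at h
    rw [integral_of_isEmpty] at hg1
    exact zero_ne_one hg1
  have hs : 0 ≤ s := (abs_nonneg _).trans (hφ x₀)
  refine le_of_forall_pos_le_add fun ε hε => integral_abs_sub_le_of_eq_mul_exp_of_pos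
    (by linarith) hg hf1 hg1 hfg fun x => (hφ x).trans (by linarith)

lemma abs_integral_mul_sub_integral_mul_le {w f₁ f₂ : α → ℝ} {C : ℝ}
    (hw : AEStronglyMeasurable w μ) (hwC : ∀ x, |w x| ≤ C)
    (hf₁ : Integrable f₁ μ) (hf₂ : Integrable f₂ μ) :
    |∫ x, w x * f₁ x ∂μ - ∫ x, w x * f₂ x ∂μ| ≤ C * ∫ x, |f₁ x - f₂ x| ∂μ := by
  have hwf : ∀ f : α → ℝ, Integrable f μ → Integrable (fun x => w x * f x) μ := fun f hf =>
    hf.bdd_mul hw (ae_of_all _ hwC)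
  rw [← integral_sub (hwf f₁ hf₁) (hwf f₂ hf₂), ← integral_const_mul]
  refine abs_integral_le_integral_abs.trans <| integral_mono
    ((hwf f₁ hf₁).sub (hwf f₂ hf₂)).abs ((hf₁.sub hf₂).abs.const_mul C) fun x => ?_
  rw [← mul_sub, abs_mul]
  exact mul_le_mul_of_nonneg_right (hwC x) (abs_nonneg _)

lemma abs_integral_mul_integral_sub_le {β : Type*} [MeasurableSpace β] {ν : Measure β}
    [SFinite μ] [SFinite ν] {w : α → ℝ} {C : ℝ} {M₁ M₂ : α × β → ℝ}
    (hw : AEStronglyMeasurable w μ) (hwC : ∀ x, |w x| ≤ C)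
    (hM₁ : Integrable M₁ (μ.prod ν)) (hM₂ : Integrable M₂ (μ.prod ν)) :
    |∫ y, w y * ∫ v, M₁ (y, v) ∂ν ∂μ - ∫ y, w y * ∫ v, M₂ (y, v) ∂ν ∂μ|
      ≤ C * ∫ p, |M₁ p - M₂ p| ∂μ.prod ν := by
  have hw' : AEStronglyMeasurable (fun p : α × β => w p.1) (μ.prod ν) :=
    hw.comp_quasiMeasurePreserving Measure.quasiMeasurePreserving_fst
  have hfubini : ∀ M : α × β → ℝ, Integrable M (μ.prod ν) →
      ∫ y, w y * ∫ v, M (y, v) ∂ν ∂μ = ∫ p, w p.1 * M p ∂μ.prod ν := fun M hM => by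
    rw [integral_prod _ (hM.bdd_mul hw' (ae_of_all _ fun p => hwC p.1))]
    simp only [integral_const_mul]
  rw [hfubini M₁ hM₁, hfubini M₂ hM₂]
  exact abs_integral_mul_sub_integral_mul_le hw' (fun p => hwC p.1) hM₁ hM₂

end

theorem gibbs_fixed_point_unique_general (d : ℕ) (β κ a CW : ℝ)
    (hβ : 0 < β) (hκ : 0 < κ)
    (W : EuclideanSpace ℝ (Fin d) → ℝ) (hWmeas : Measurable W)
    (hWbd : ∀ x, |W x| ≤ CW)
    (hsmall : κ * β * CW < 1)
    (M₁ M₂ : EuclideanSpace ℝ (Fin d) × EuclideanSpace ℝ (Fin d) → ℝ)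
    (hM₁prob : ∫ p, M₁ p = 1) (hM₂prob : ∫ p, M₂ p = 1)
    (hM₁fix : ∃ c₁ : ℝ, 0 < c₁ ∧ ∀ x v, M₁ (x, v) =
      c₁ * Real.exp (-β * (‖v‖ ^ 2 / 2 + a / 2 * ‖x‖ ^ 2
        + κ * ∫ y, W (x - y) * ∫ w, M₁ (y, w))))
    (hM₂fix : ∃ c₂ : ℝ, 0 < c₂ ∧ ∀ x v, M₂ (x, v) =
      c₂ * Real.exp (-β * (‖v‖ ^ 2 / 2 + a / 2 * ‖x‖ ^ 2
        + κ * ∫ y, W (x - y) * ∫ w, M₂ (y, w)))) :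
    M₁ = M₂ := by
  obtain ⟨c₁, -, hfix₁⟩ := hM₁fix
  obtain ⟨c₂, hc₂, hfix₂⟩ := hM₂fix
  set u₁ := fun x => ∫ y, W (x - y) * ∫ w, M₁ (y, w)
  set u₂ := fun x => ∫ y, W (x - y) * ∫ w, M₂ (y, w)
  set D := ∫ p, |M₁ p - M₂ p|
  have hM₁ : Integrable M₁ (volume.prod volume) :=
    .of_integral_ne_zero (by rw [← Measure.volume_eq_prod, hM₁prob]; exact one_ne_zero)
  have hM₂ : Integrable M₂ (volume.prod volume) :=
    .of_integral_ne_zero (by rw [← Measure.volume_eq_prod, hM₂prob]; exact one_ne_zero)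
  have hu : ∀ x, |u₁ x - u₂ x| ≤ CW * D := fun x =>
    abs_integral_mul_integral_sub_le
      (hWmeas.comp (measurable_const.sub measurable_id)).aestronglyMeasurable
      (fun y => hWbd (x - y)) hM₁ hM₂
  have hratio : ∀ p, M₁ p = c₁ / c₂ * exp (-(β * κ) * (u₁ p.1 - u₂ p.1)) * M₂ p := by
    rintro ⟨x, v⟩
    rw [hfix₁, hfix₂]
    simp only [u₁, u₂]
    field_simp
    rw [mul_assoc c₁, ← exp_add]
    ring_nf
  have hD : D ≤ β * κ * (CW * D) := by
    refine integral_abs_sub_le_of_eq_mul_exp (fun p => ?_) hM₁prob hM₂prob hratio fun p => ?_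
    · rw [← p.eta, hfix₂]; positivity
    · rw [abs_mul, abs_neg, abs_of_pos (by positivity)]
      exact mul_le_mul_of_nonneg_left (hu p.1) (by positivity)
  have hD0 : D = 0 := by
    have hD_nonneg : 0 ≤ D := integral_nonneg fun p => abs_nonneg _
    nlinarith
  have hu_eq : ∀ x, u₁ x = u₂ x := fun x =>
    sub_eq_zero.1 (abs_nonpos_iff.1 (by simpa [hD0] using hu x))
  have hM₁_eq : ∀ p, M₁ p = c₁ / c₂ * M₂ p := fun p => by
    rw [hratio p, hu_eq, sub_self, mul_zero, exp_zero, mul_one]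
  have hc : c₁ / c₂ = 1 :=
    calc c₁ / c₂ = ∫ p, c₁ / c₂ * M₂ p := by rw [integral_const_mul, hM₂prob, mul_one]
      _ = 1 := by simp only [← hM₁_eq, hM₁prob]
  funext p
  rw [hM₁_eq, hc, one_mul]

/-- uniqueness of the Gibbs fixed point. With a bounded even
interaction `W` satisfying `κβ‖W‖_∞ < 1` and quadratic confinement
`A(x) = (a/2)|x|²`, the fixed-point equation
`M(x,v) = c exp[-β(|v|²/2 + A(x) + κ (W * ρ_M)(x))]`, `ρ_M(x) = ∫ M(x,v) dv`,
has at most one solution among probability densities on `ℝ^d × ℝ^d`. -/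
theorem gibbs_fixed_point_unique (d : ℕ) (β κ a CW : ℝ)
    (hβ : 0 < β) (hκ : 0 < κ) (ha : 0 < a)
    (W : EuclideanSpace ℝ (Fin d) → ℝ) (hWmeas : Measurable W)
    (hWbd : ∀ x, |W x| ≤ CW) (hWeven : ∀ x, W (-x) = W x)
    (hsmall : κ * β * CW < 1)
    (M₁ M₂ : EuclideanSpace ℝ (Fin d) × EuclideanSpace ℝ (Fin d) → ℝ)
    (hM₁meas : Measurable M₁) (hM₂meas : Measurable M₂)
    (hM₁pos : ∀ p, 0 ≤ M₁ p) (hM₂pos : ∀ p, 0 ≤ M₂ p)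
    (hM₁prob : ∫ p, M₁ p = 1) (hM₂prob : ∫ p, M₂ p = 1)
    (hM₁fix : ∃ c₁ : ℝ, 0 < c₁ ∧ ∀ x v, M₁ (x, v) =
      c₁ * Real.exp (-β * (‖v‖ ^ 2 / 2 + a / 2 * ‖x‖ ^ 2
        + κ * ∫ y, W (x - y) * ∫ w, M₁ (y, w))))
    (hM₂fix : ∃ c₂ : ℝ, 0 < c₂ ∧ ∀ x v, M₂ (x, v) =
      c₂ * Real.exp (-β * (‖v‖ ^ 2 / 2 + a / 2 * ‖x‖ ^ 2
        + κ * ∫ y, W (x - y) * ∫ w, M₂ (y, w)))) :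
    M₁ = M₂ :=
  gibbs_fixed_point_unique_general d β κ a CW hβ hκ W hWmeas hWbd hsmall M₁ M₂ hM₁prob hM₂prob
    hM₁fix hM₂fix
end

section
/- (Iterated suboptimal-to-optimal bound structure.) Let $(a_n)_{n\ge1}$ be nonnegative reals satisfying $a_1 \le C$ and, for all $2 \le n \le M$, $a_n \le C\Big(N^{-n/2} + \varepsilon_n + \sum_{1\le k\le l\le n-1}\ \sum_{j_1,\dots,j_k\ge1,\ j_1+\dots+j_k = l} N^{l - k - n + 1} \prod_{i=1}^k a_{j_i}\Big)$ for constants $C \ge 1$, $N \ge 1$ and nonnegative $\varepsilon_n$. If additionally $a_j \le C_j (N^{-j/2} + \varepsilon_j')$ for all $j < n$ with $\varepsilon_j' \le \varepsilon_2'{}^{j/2}$ for some $\varepsilon_2' \le 1$, then $a_n \le C_n' (N^{-n/2} + \varepsilon_n + \varepsilon_2'{}^{n/2})$ for a constant $C_n'$ depending only on $C, C_1, \dots, C_{n-1}, n$. -/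
open Finset

/-- abstract iteration turning suboptimal hierarchical bounds into
bounds of order `N^{-n/2}`.  The sequence `(a_k)` satisfies the hierarchy of
inequalities with the double sum over `1 ≤ k ≤ l ≤ n-1` and over compositions
`j_1 + … + j_k = l`, `j_i ≥ 1`, with weights `N^{l-k-n+1}`; if in addition the
lower-order terms satisfy `a_j ≤ C_j (N^{-j/2} + ε'_j)` with `ε'_j ≤ ε'_2^{j/2}`
and `ε'_2 ≤ 1`, then `a_n ≤ C'_n (N^{-n/2} + ε_n + ε'_2^{n/2})`, where `C'_n`
depends only on `C, C_1, …, C_{n-1}, n`. -/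
theorem iterated_suboptimal_to_optimal (n : ℕ) (hn : 2 ≤ n)
    (C : ℝ) (hC : 1 ≤ C) (Cj : ℕ → ℝ) :
    ∃ C' : ℝ, 0 ≤ C' ∧
      ∀ (M : ℕ), n ≤ M → ∀ (N : ℝ), 1 ≤ N → ∀ a ε ε' : ℕ → ℝ,
        (∀ k, 0 ≤ a k) → (∀ k, 0 ≤ ε k) → (∀ k, 0 ≤ ε' k) →
        a 1 ≤ C →
        (∀ nn, 2 ≤ nn → nn ≤ M →
          a nn ≤ C * (N ^ (-(nn : ℝ) / 2) + ε nn +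
            ∑ l ∈ Finset.Icc 1 (nn - 1), ∑ k ∈ Finset.Icc 1 l,
              ∑ f ∈ Finset.univ.filter
                  (fun f : Fin k → Fin (l + 1) =>
                    (∀ i, 1 ≤ (f i : ℕ)) ∧ (∑ i, (f i : ℕ)) = l),
                N ^ ((l : ℤ) - k - nn + 1) * ∏ i, a (f i))) →
        (∀ j, 1 ≤ j → j < n → a j ≤ Cj j * (N ^ (-(j : ℝ) / 2) + ε' j)) →
        (∀ j, 1 ≤ j → j < n → ε' j ≤ (ε' 2) ^ ((j : ℝ) / 2)) →
        ε' 2 ≤ 1 →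
        a n ≤ C' * (N ^ (-(n : ℝ) / 2) + ε n + (ε' 2) ^ ((n : ℝ) / 2)) := by
  set D : ℝ := 2 * (1 + ∑ j ∈ Finset.Icc 1 (n - 1), |Cj j|) with hDdef
  have hsum0 : (0:ℝ) ≤ ∑ j ∈ Finset.Icc 1 (n - 1), |Cj j| :=
    Finset.sum_nonneg fun j _ => abs_nonneg _
  have hD1 : (1:ℝ) ≤ D := by rw [hDdef]; nlinarith
  have hD0 : (0:ℝ) ≤ D := le_trans zero_le_one hD1
  refine ⟨C * (1 + (n:ℝ)^(n+2) * D^(n-1)), by positivity, ?_⟩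
  intro M hnM N hN a ε ε' ha0 hε0 hε'0 ha1 hrec hlow hε'pow hε'2
  have hN0 : (0:ℝ) < N := lt_of_lt_of_le one_pos hN
  set u : ℝ := N ^ (-(1:ℝ)/2) with hu
  set v : ℝ := (ε' 2) ^ ((1:ℝ)/2) with hv
  set x : ℝ := max u v with hx
  have hu0 : 0 ≤ u := Real.rpow_nonneg (le_of_lt hN0) _
  have hv0 : 0 ≤ v := Real.rpow_nonneg (hε'0 2) _
  have hx0 : 0 ≤ x := le_trans hu0 (le_max_left _ _)
  have hu1 : u ≤ 1 := Real.rpow_le_one_of_one_le_of_nonpos hN (by norm_num)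
  have hv1 : v ≤ 1 := Real.rpow_le_one (hε'0 2) hε'2 (by norm_num)
  have hx1 : x ≤ 1 := max_le hu1 hv1
  -- u^j = N^(-j/2), v^j = ε'2^(j/2)
  have huj : ∀ j : ℕ, u ^ j = N ^ (-(j:ℝ)/2) := by
    intro j
    rw [hu, ← Real.rpow_natCast (N ^ (-(1:ℝ)/2)) j, ← Real.rpow_mul (le_of_lt hN0)]
    ring_nf
  have hvj : ∀ j : ℕ, v ^ j = (ε' 2) ^ ((j:ℝ)/2) := by
    intro j
    rw [hv, ← Real.rpow_natCast ((ε' 2) ^ ((1:ℝ)/2)) j, ← Real.rpow_mul (hε'0 2)]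
    ring_nf
  -- a j ≤ D * x^j for 1 ≤ j < n
  have haj : ∀ j : ℕ, 1 ≤ j → j < n → a j ≤ D * x ^ j := by
    intro j h1 h2
    have h3 : a j ≤ |Cj j| * (N ^ (-(j:ℝ)/2) + ε' j) := by
      refine le_trans (hlow j h1 h2) ?_
      have hpos : 0 ≤ N ^ (-(j:ℝ)/2) + ε' j :=
        add_nonneg (Real.rpow_nonneg (le_of_lt hN0) _) (hε'0 j)
      exact mul_le_mul_of_nonneg_right (le_abs_self _) hpos
    have h4 : N ^ (-(j:ℝ)/2) ≤ x ^ j := by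
      rw [← huj j]; exact pow_le_pow_left₀ hu0 (le_max_left _ _) j
    have h5 : ε' j ≤ x ^ j := by
      refine le_trans (hε'pow j h1 h2) ?_
      rw [← hvj j]; exact pow_le_pow_left₀ hv0 (le_max_right _ _) j
    have h6 : |Cj j| * 2 ≤ D := by
      rw [hDdef]
      have : |Cj j| ≤ ∑ i ∈ Finset.Icc 1 (n - 1), |Cj i| :=
        Finset.single_le_sum (fun i _ => abs_nonneg (Cj i))
          (Finset.mem_Icc.mpr ⟨h1, by omega⟩)
      nlinarith
    have hxj0 : 0 ≤ x ^ j := pow_nonneg hx0 j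
    nlinarith [abs_nonneg (Cj j)]
  -- N⁻¹ ≤ x^2
  have hNinv : N⁻¹ ≤ x ^ 2 := by
    have : u ^ 2 = N⁻¹ := by
      rw [huj 2]
      rw [show (-(2:ℕ):ℝ)/2 = (-1 : ℝ) by push_cast; ring]
      rw [Real.rpow_neg_one]
    rw [← this]
    exact pow_le_pow_left₀ hu0 (le_max_left _ _) 2
  -- the key term bound
  set E : ℝ := D ^ (n-1) * x ^ n with hE
  have hE0 : 0 ≤ E := mul_nonneg (pow_nonneg hD0 _) (pow_nonneg hx0 _)
  have hterm : ∀ l ∈ Finset.Icc 1 (n-1), ∀ k ∈ Finset.Icc 1 l,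
      ∀ f ∈ Finset.univ.filter (fun f : Fin k → Fin (l + 1) =>
          (∀ i, 1 ≤ (f i : ℕ)) ∧ (∑ i, (f i : ℕ)) = l),
      N ^ ((l : ℤ) - k - n + 1) * ∏ i, a (f i) ≤ E := by
    intro l hl k hk f hf
    rw [Finset.mem_Icc] at hl hk
    rw [Finset.mem_filter] at hf
    obtain ⟨-, hf1, hfsum⟩ := hf
    -- product bound
    have hprod : ∏ i, a (f i) ≤ D ^ k * x ^ l := by
      have : ∏ i, a (f i) ≤ ∏ i : Fin k, D * x ^ (f i : ℕ) := by
        refine Finset.prod_le_prod (fun i _ => ha0 _) (fun i _ => ?_)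
        exact haj _ (hf1 i) (by have := (f i).isLt; omega)
      refine le_trans this ?_
      rw [Finset.prod_mul_distrib, Finset.prod_const, Finset.prod_pow_eq_pow_sum, hfsum]
      simp [Finset.card_univ]
    have hprod0 : 0 ≤ ∏ i, a (f i) := Finset.prod_nonneg fun i _ => ha0 _
    -- exponent
    set m : ℕ := n - 1 + k - l with hm
    have hmeq : (l : ℤ) - k - n + 1 = -(m : ℤ) := by
      have h1 := hl.2; have h2 := hk.1; have h3 := hk.2
      push_cast [hm]; omega
    have hNpow : N ^ ((l : ℤ) - k - n + 1) ≤ (x ^ 2) ^ m := by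
      rw [hmeq, zpow_neg, zpow_natCast, ← inv_pow]
      exact pow_le_pow_left₀ (inv_nonneg.mpr (le_of_lt hN0)) hNinv m
    have hNp0 : (0:ℝ) ≤ N ^ ((l : ℤ) - k - n + 1) := zpow_nonneg (le_of_lt hN0) _
    calc N ^ ((l : ℤ) - k - n + 1) * ∏ i, a (f i)
        ≤ (x ^ 2) ^ m * (D ^ k * x ^ l) := by
          apply mul_le_mul hNpow hprod hprod0 (pow_nonneg (pow_nonneg hx0 2) m)
      _ = D ^ k * x ^ (2 * m + l) := by ring
      _ ≤ D ^ (n-1) * x ^ n := by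
          apply mul_le_mul
          · exact pow_le_pow_right₀ hD1 (by omega)
          · apply pow_le_pow_of_le_one hx0 hx1; omega
          · exact pow_nonneg hx0 _
          · exact pow_nonneg hD0 _
  -- sum bound
  have hsumS : (∑ l ∈ Finset.Icc 1 (n - 1), ∑ k ∈ Finset.Icc 1 l,
      ∑ f ∈ Finset.univ.filter (fun f : Fin k → Fin (l + 1) =>
          (∀ i, 1 ≤ (f i : ℕ)) ∧ (∑ i, (f i : ℕ)) = l),
        N ^ ((l : ℤ) - k - n + 1) * ∏ i, a (f i))
      ≤ (n:ℝ)^(n+2) * E := by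
    have hinner : ∀ l ∈ Finset.Icc 1 (n-1), ∀ k ∈ Finset.Icc 1 l,
        (∑ f ∈ Finset.univ.filter (fun f : Fin k → Fin (l + 1) =>
            (∀ i, 1 ≤ (f i : ℕ)) ∧ (∑ i, (f i : ℕ)) = l),
          N ^ ((l : ℤ) - k - n + 1) * ∏ i, a (f i)) ≤ (n:ℝ)^n * E := by
      intro l hl k hk
      have hcard : ((Finset.univ.filter (fun f : Fin k → Fin (l + 1) =>
          (∀ i, 1 ≤ (f i : ℕ)) ∧ (∑ i, (f i : ℕ)) = l)).card : ℝ) ≤ (n:ℝ)^n := by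
        rw [Finset.mem_Icc] at hl hk
        have h1 : (Finset.univ.filter (fun f : Fin k → Fin (l + 1) =>
            (∀ i, 1 ≤ (f i : ℕ)) ∧ (∑ i, (f i : ℕ)) = l)).card ≤ (l+1)^k := by
          refine le_trans (Finset.card_filter_le _ _) ?_
          rw [Finset.card_univ]
          simp [Fintype.card_fun]
        have hln : l + 1 ≤ n := by clear * - hl hn; omega
        have hkn : k ≤ n := by clear * - hk hl hn; omega
        have hn1 : 1 ≤ n := by clear * - hn; omega
        have h2 : (l+1)^k ≤ n^n :=
          le_trans (Nat.pow_le_pow_left hln k) (Nat.pow_le_pow_right hn1 hkn)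
        exact_mod_cast le_trans h1 h2
      calc (∑ f ∈ Finset.univ.filter (fun f : Fin k → Fin (l + 1) =>
            (∀ i, 1 ≤ (f i : ℕ)) ∧ (∑ i, (f i : ℕ)) = l),
          N ^ ((l : ℤ) - k - n + 1) * ∏ i, a (f i))
          ≤ ∑ _f ∈ Finset.univ.filter (fun f : Fin k → Fin (l + 1) =>
            (∀ i, 1 ≤ (f i : ℕ)) ∧ (∑ i, (f i : ℕ)) = l), E :=
            Finset.sum_le_sum (hterm l hl k hk)
        _ = ((Finset.univ.filter (fun f : Fin k → Fin (l + 1) =>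
            (∀ i, 1 ≤ (f i : ℕ)) ∧ (∑ i, (f i : ℕ)) = l)).card : ℝ) * E := by
            rw [Finset.sum_const, nsmul_eq_mul]
        _ ≤ (n:ℝ)^n * E := mul_le_mul_of_nonneg_right hcard hE0
    have hmid : ∀ l ∈ Finset.Icc 1 (n-1),
        (∑ k ∈ Finset.Icc 1 l, ∑ f ∈ Finset.univ.filter (fun f : Fin k → Fin (l + 1) =>
            (∀ i, 1 ≤ (f i : ℕ)) ∧ (∑ i, (f i : ℕ)) = l),
          N ^ ((l : ℤ) - k - n + 1) * ∏ i, a (f i)) ≤ (n:ℝ)^(n+1) * E := by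
      intro l hl
      calc (∑ k ∈ Finset.Icc 1 l, ∑ f ∈ Finset.univ.filter (fun f : Fin k → Fin (l + 1) =>
              (∀ i, 1 ≤ (f i : ℕ)) ∧ (∑ i, (f i : ℕ)) = l),
            N ^ ((l : ℤ) - k - n + 1) * ∏ i, a (f i))
          ≤ ∑ _k ∈ Finset.Icc 1 l, (n:ℝ)^n * E := Finset.sum_le_sum (hinner l hl)
        _ = ((Finset.Icc 1 l).card : ℝ) * ((n:ℝ)^n * E) := by
            rw [Finset.sum_const, nsmul_eq_mul]
        _ ≤ (n:ℝ) * ((n:ℝ)^n * E) := by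
            apply mul_le_mul_of_nonneg_right _ (by positivity)
            rw [Finset.mem_Icc] at hl
            rw [Nat.card_Icc]
            exact_mod_cast (by omega : l + 1 - 1 ≤ n)
        _ = (n:ℝ)^(n+1) * E := by ring
    calc (∑ l ∈ Finset.Icc 1 (n - 1), ∑ k ∈ Finset.Icc 1 l,
          ∑ f ∈ Finset.univ.filter (fun f : Fin k → Fin (l + 1) =>
              (∀ i, 1 ≤ (f i : ℕ)) ∧ (∑ i, (f i : ℕ)) = l),
            N ^ ((l : ℤ) - k - n + 1) * ∏ i, a (f i))
        ≤ ∑ _l ∈ Finset.Icc 1 (n-1), (n:ℝ)^(n+1) * E := Finset.sum_le_sum hmid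
      _ = ((Finset.Icc 1 (n-1)).card : ℝ) * ((n:ℝ)^(n+1) * E) := by
          rw [Finset.sum_const, nsmul_eq_mul]
      _ ≤ (n:ℝ) * ((n:ℝ)^(n+1) * E) := by
          apply mul_le_mul_of_nonneg_right _ (by positivity)
          rw [Nat.card_Icc]
          exact_mod_cast (by omega : n - 1 + 1 - 1 ≤ n)
      _ = (n:ℝ)^(n+2) * E := by ring
  -- x^n ≤ N^{-n/2} + ε'2^{n/2}
  have hxn : x ^ n ≤ N ^ (-(n:ℝ)/2) + (ε' 2) ^ ((n:ℝ)/2) := by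
    have h1 : (0:ℝ) ≤ N ^ (-(n:ℝ)/2) := Real.rpow_nonneg (le_of_lt hN0) _
    have h2 : (0:ℝ) ≤ (ε' 2) ^ ((n:ℝ)/2) := Real.rpow_nonneg (hε'0 2) _
    rcases max_cases u v with ⟨hm, -⟩ | ⟨hm, -⟩
    · rw [hx, hm, huj n]; linarith
    · rw [hx, hm, hvj n]; linarith
  -- assemble
  have hmain := hrec n hn hnM
  set A : ℝ := N ^ (-(n:ℝ)/2) with hA
  set P : ℝ := (ε' 2) ^ ((n:ℝ)/2) with hP
  have hA0 : 0 ≤ A := Real.rpow_nonneg (le_of_lt hN0) _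
  have hP0 : 0 ≤ P := Real.rpow_nonneg (hε'0 2) _
  have hK0 : (0:ℝ) ≤ (n:ℝ)^(n+2) * D^(n-1) := by positivity
  have hC0 : (0:ℝ) ≤ C := le_trans zero_le_one hC
  have hS : (∑ l ∈ Finset.Icc 1 (n - 1), ∑ k ∈ Finset.Icc 1 l,
      ∑ f ∈ Finset.univ.filter (fun f : Fin k → Fin (l + 1) =>
          (∀ i, 1 ≤ (f i : ℕ)) ∧ (∑ i, (f i : ℕ)) = l),
        N ^ ((l : ℤ) - k - n + 1) * ∏ i, a (f i))
      ≤ (n:ℝ)^(n+2) * D^(n-1) * (A + P) := by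
    refine le_trans hsumS ?_
    rw [hE]
    calc (n:ℝ)^(n+2) * (D^(n-1) * x^n) = (n:ℝ)^(n+2) * D^(n-1) * x^n := by ring
      _ ≤ (n:ℝ)^(n+2) * D^(n-1) * (A + P) := mul_le_mul_of_nonneg_left hxn hK0
  have hεn := hε0 n
  set K : ℝ := (n:ℝ)^(n+2) * D^(n-1) with hKdef
  calc a n ≤ C * (A + ε n + (∑ l ∈ Finset.Icc 1 (n - 1), ∑ k ∈ Finset.Icc 1 l,
      ∑ f ∈ Finset.univ.filter (fun f : Fin k → Fin (l + 1) =>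
          (∀ i, 1 ≤ (f i : ℕ)) ∧ (∑ i, (f i : ℕ)) = l),
        N ^ ((l : ℤ) - k - n + 1) * ∏ i, a (f i))) := hmain
    _ ≤ C * (A + ε n + K * (A + P)) := by
        apply mul_le_mul_of_nonneg_left _ hC0
        linarith [hS]
    _ ≤ C * ((1 + K) * (A + ε n + P)) := by
        apply mul_le_mul_of_nonneg_left _ hC0
        nlinarith [mul_nonneg hK0 hεn]
    _ = C * (1 + K) * (A + ε n + P) := by ring
end
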